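/- arXiv:2211.07132 — 2 statements merged into one kernel-verified Lean document; each statement's English description precedes it below -/
import Mathlib

section
/- Let p > r > 2. Then ℓ_p^2 does not (1+ε)-embed into ℓ_r^N for sufficiently small ε > 0: there do not exist vectors u, v ∈ ℝ^N such that for all a, b ∈ ℝ, (1/(1+ε))·(|a|^p + |b|^p)^{1/p} ≤ ‖a·u + b·v‖_r ≤ (1+ε)·(|a|^p + |b|^p)^{1/p}. -/
lemma my_rpow_add_rpow_le_rpow {a b q : ℝ} (ha : 0 ≤ a) (hb : 0 ≤ b) (hq : 1 ≤ q) :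
    a ^ q + b ^ q ≤ (a + b) ^ q := by
  rcases eq_or_lt_of_le (add_nonneg ha hb) with h0 | h0
  · have ha0 : a = 0 := by linarith [ha, hb]
    have hb0 : b = 0 := by linarith
    simp [ha0, hb0, Real.zero_rpow (by linarith : q ≠ 0)]
  · have hq1 : q - 1 + 1 = q := by ring
    have h1 : a ^ q ≤ (a + b) ^ (q - 1) * a := by
      calc a ^ q = a ^ (q - 1) * a ^ (1:ℝ) := by
            rw [← Real.rpow_add' ha (by linarith)]; ring_nf
        _ ≤ (a + b) ^ (q - 1) * a := by
            rw [Real.rpow_one]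
            exact mul_le_mul_of_nonneg_right
              (Real.rpow_le_rpow ha (by linarith) (by linarith)) ha
    have h2 : b ^ q ≤ (a + b) ^ (q - 1) * b := by
      calc b ^ q = b ^ (q - 1) * b ^ (1:ℝ) := by
            rw [← Real.rpow_add' hb (by linarith)]; ring_nf
        _ ≤ (a + b) ^ (q - 1) * b := by
            rw [Real.rpow_one]
            exact mul_le_mul_of_nonneg_right
              (Real.rpow_le_rpow hb (by linarith) (by linarith)) hb
    calc a ^ q + b ^ q ≤ (a + b) ^ (q - 1) * (a + b) := by rw [mul_add]; linarith
      _ = (a + b) ^ q := by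
          nth_rewrite 2 [← Real.rpow_one (a+b)]
          rw [← Real.rpow_add h0, hq1]

lemma my_sq_rpow (x q : ℝ) : (x ^ 2) ^ q = |x| ^ (2 * q) := by
  rw [← sq_abs x, Real.rpow_mul (abs_nonneg x)]
  norm_num

lemma my_clarkson {r : ℝ} (hr : 2 ≤ r) (x y : ℝ) :
    2 * (|x| ^ r + |y| ^ r) ≤ |x + y| ^ r + |x - y| ^ r := by
  have hq : 1 ≤ r / 2 := by linarith
  have hrr : 2 * (r / 2) = r := by ring
  have h1 : |x| ^ r + |y| ^ r ≤ (x ^ 2 + y ^ 2) ^ (r / 2) := by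
    have := my_rpow_add_rpow_le_rpow (sq_nonneg x) (sq_nonneg y) hq
    rwa [my_sq_rpow, my_sq_rpow, hrr] at this
  have h2 : (x ^ 2 + y ^ 2) ^ (r / 2) ≤ (|x + y| ^ r + |x - y| ^ r) / 2 := by
    have hc := (convexOn_rpow hq).2 (Set.mem_Ici.2 (sq_nonneg (x + y)))
      (Set.mem_Ici.2 (sq_nonneg (x - y))) (by norm_num : (0:ℝ) ≤ 1/2)
      (by norm_num : (0:ℝ) ≤ 1/2) (by norm_num)
    simp only [smul_eq_mul] at hc
    rw [show (1/2 : ℝ) * (x + y) ^ 2 + (1/2 : ℝ) * (x - y) ^ 2 = x ^ 2 + y ^ 2 by ring,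
      my_sq_rpow, my_sq_rpow, hrr] at hc
    linarith
  linarith

/-- ℓ_p^2 does not (1+ε)-embed into ℓ_r^N when p > r > 2, for
sufficiently small ε. -/
theorem stmt_14 (p r : ℝ) (hr : 2 < r) (hpr : r < p) :
    ∃ ε₀ : ℝ, 0 < ε₀ ∧ ∀ ε : ℝ, 0 < ε → ε < ε₀ →
      ∀ N : ℕ, ∀ u v : Fin N → ℝ,
        ¬ (∀ a b : ℝ,
            (1 / (1 + ε)) * (|a| ^ p + |b| ^ p) ^ (1 / p)
                ≤ (∑ i, |a * u i + b * v i| ^ r) ^ (1 / r) ∧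
            (∑ i, |a * u i + b * v i| ^ r) ^ (1 / r)
                ≤ (1 + ε) * (|a| ^ p + |b| ^ p) ^ (1 / p)) := by
  have hp0 : (0:ℝ) < p := by linarith
  have hr0 : (0:ℝ) < r := by linarith
  have hc0 : 0 < (1 - r / p) / (2 * r) := by
    apply div_pos _ (by linarith)
    have : r / p < 1 := (div_lt_one hp0).2 hpr
    linarith
  set c := (1 - r / p) / (2 * r) with hc
  set δ := (2:ℝ) ^ c with hδ
  have hδ1 : 1 < δ := Real.one_lt_rpow_iff_of_pos two_pos |>.2 (Or.inl ⟨one_lt_two, hc0⟩)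
  refine ⟨δ - 1, by linarith, ?_⟩
  intro ε hε hεδ N u v H
  set E := 1 + ε with hE
  have hE1 : 1 < E := by linarith
  have hE0 : 0 < E := by linarith
  -- basic simplifications of H at the four points
  have habs1 : |(1:ℝ)| ^ p = 1 := by rw [abs_one, Real.one_rpow]
  have habsm1 : |(-1:ℝ)| ^ p = 1 := by rw [abs_neg, abs_one, Real.one_rpow]
  have habs0 : |(0:ℝ)| ^ p = 0 := by rw [abs_zero, Real.zero_rpow (by linarith)]
  -- nonnegativity of sums
  have hsum : ∀ w : Fin N → ℝ, 0 ≤ ∑ i, |w i| ^ r := fun w =>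
    Finset.sum_nonneg fun i _ => Real.rpow_nonneg (abs_nonneg _) r
  -- lower bounds for u and v
  have lower : ∀ w : Fin N → ℝ, 1 / E ≤ (∑ i, |w i| ^ r) ^ (1 / r) →
      (1 / E) ^ r ≤ ∑ i, |w i| ^ r := by
    intro w h
    have h2 := Real.rpow_le_rpow (by positivity) h (le_of_lt hr0)
    rwa [← Real.rpow_mul (hsum w), one_div_mul_cancel (ne_of_gt hr0),
      Real.rpow_one] at h2
  have upper : ∀ w : Fin N → ℝ, (∑ i, |w i| ^ r) ^ (1 / r) ≤ E * 2 ^ (1 / p) →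
      ∑ i, |w i| ^ r ≤ (E * 2 ^ (1 / p)) ^ r := by
    intro w h
    have h2 := Real.rpow_le_rpow (Real.rpow_nonneg (hsum w) _) h (le_of_lt hr0)
    rwa [← Real.rpow_mul (hsum w), one_div_mul_cancel (ne_of_gt hr0),
      Real.rpow_one] at h2
  have h10 := (H 1 0).1
  have h01 := (H 0 1).1
  have h11 := (H 1 1).2
  have h1m1 := (H 1 (-1)).2
  simp only [habs1, habs0, habsm1, one_mul, zero_mul, neg_one_mul, add_zero, zero_add,
    Real.one_rpow, mul_one, show (1:ℝ)+1 = 2 by norm_num] at h10 h01 h11 h1m1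
  have hU := lower u h10
  have hV := lower v h01
  have hA : ∑ i, |u i + v i| ^ r ≤ (E * 2 ^ (1 / p)) ^ r := upper _ h11
  have hB : ∑ i, |u i - v i| ^ r ≤ (E * 2 ^ (1 / p)) ^ r := by
    have := upper (fun i => u i - v i) ?_
    · simpa using this
    · simpa [sub_eq_add_neg] using h1m1
  -- Clarkson summed
  have hkey : 2 * ((∑ i, |u i| ^ r) + ∑ i, |v i| ^ r)
      ≤ (∑ i, |u i + v i| ^ r) + ∑ i, |u i - v i| ^ r := by
    rw [← Finset.sum_add_distrib, ← Finset.sum_add_distrib, Finset.mul_sum]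
    exact Finset.sum_le_sum fun i _ => my_clarkson (le_of_lt hr) (u i) (v i)
  -- numeric contradiction
  have e1 : (1 / E) ^ r = 1 / E ^ r := by
    rw [Real.div_rpow zero_le_one (le_of_lt hE0), Real.one_rpow]
  have e2 : (E * 2 ^ (1 / p)) ^ r = E ^ r * 2 ^ (r / p) := by
    rw [Real.mul_rpow (le_of_lt hE0) (by positivity),
      ← Real.rpow_mul (by norm_num : (0:ℝ) ≤ 2), show 1 / p * r = r / p by ring]
  rw [e1] at hU hV
  rw [e2] at hA hB
  have hEr : 0 < E ^ r := Real.rpow_pos_of_pos hE0 r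
  have h3 : 2 * (1 / E ^ r) ≤ E ^ r * 2 ^ (r / p) := by linarith
  have h4 : (2:ℝ) ≤ (E ^ r * 2 ^ (r / p)) * E ^ r := by
    rw [mul_one_div] at h3
    exact (div_le_iff₀ hEr).1 h3
  have h5 : E ^ (2 * r) = E ^ r * E ^ r := by
    rw [show 2 * r = r + r by ring, Real.rpow_add hE0]
  have h6 : (2:ℝ) ^ (1 - r / p) ≤ E ^ (2 * r) := by
    rw [Real.rpow_sub two_pos, Real.rpow_one, div_le_iff₀ (Real.rpow_pos_of_pos two_pos _)]
    calc (2:ℝ) ≤ (E ^ r * 2 ^ (r / p)) * E ^ r := h4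
      _ = E ^ (2 * r) * 2 ^ (r / p) := by rw [h5]; ring
  have h7 : E ^ (2 * r) < 2 ^ (1 - r / p) := by
    have hEδ : E < δ := by rw [hE]; linarith
    have := Real.rpow_lt_rpow (le_of_lt hE0) hEδ (by linarith : 0 < 2 * r)
    rwa [hδ, ← Real.rpow_mul (by norm_num : (0:ℝ) ≤ 2), hc,
      div_mul_cancel₀ _ (by positivity : 2 * r ≠ 0)] at this
  linarith
end

section
/- Let A ∈ ℝ^{(i−1)×d} have a decomposition A = UT where U ∈ ℝ^{(i−1)×r} satisfies c₁ ≤ ‖Ux‖_p ≤ c₂ for all unit vectors x ∈ ℝ^r (c₁, c₂ > 0), T ∈ ℝ^{r×d} has full row rank with right inverse T† (T T† = I, colspace(T†) = rowspace(T)). Suppose a ∈ rowspace(A) and set b = (T†)ᵀ a. Then ‖b‖₂^p / c₂^p ≤ sup_{x ∈ rowspace(A), x ≠ 0} |⟨a, x⟩|^p / ‖Ax‖_p^p ≤ ‖b‖₂^p / c₁^p. -/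
section helpers
open Finset Matrix

private lemma aux_bounds' (n m : ℕ) (p c₁ c₂ : ℝ) (hp : 1 ≤ p) (hc₁ : 0 < c₁)
    (U : Fin n → Fin m → ℝ)
    (hU : ∀ x : Fin m → ℝ, Real.sqrt (∑ k, x k ^ 2) = 1 →
      c₁ ≤ (∑ i, |∑ k, U i k * x k| ^ p) ^ (1 / p) ∧
      (∑ i, |∑ k, U i k * x k| ^ p) ^ (1 / p) ≤ c₂)
    (y : Fin m → ℝ) (hy : y ≠ 0) :
    c₁ ^ p * Real.sqrt (∑ k, y k ^ 2) ^ p ≤ ∑ i, |∑ k, U i k * y k| ^ p ∧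
    ∑ i, |∑ k, U i k * y k| ^ p ≤ c₂ ^ p * Real.sqrt (∑ k, y k ^ 2) ^ p := by
  have hp0 : (0:ℝ) < p := lt_of_lt_of_le one_pos hp
  obtain ⟨k₀, hk₀⟩ : ∃ k, y k ≠ 0 := Function.ne_iff.mp hy
  have hsumpos : 0 < ∑ k, y k ^ 2 :=
    Finset.sum_pos' (fun k _ => sq_nonneg _) ⟨k₀, Finset.mem_univ _, sq_pos_of_ne_zero hk₀⟩
  set s := Real.sqrt (∑ k, y k ^ 2) with hs_def
  have hs : 0 < s := Real.sqrt_pos.mpr hsumpos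
  set u : Fin m → ℝ := fun k => y k / s with hu_def
  have hunorm : Real.sqrt (∑ k, u k ^ 2) = 1 := by
    have h1 : ∑ k, u k ^ 2 = (∑ k, y k ^ 2) / s ^ 2 := by
      simp only [hu_def, div_pow, ← Finset.sum_div]
    rw [h1, Real.sq_sqrt hsumpos.le, div_self hsumpos.ne']
    exact Real.sqrt_one
  obtain ⟨h1, h2⟩ := hU u hunorm
  set X := ∑ i, |∑ k, U i k * u k| ^ p with hX_def
  have hXnn : 0 ≤ X := Finset.sum_nonneg fun i _ => Real.rpow_nonneg (abs_nonneg _) _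
  have hpow : (X ^ (1 / p)) ^ p = X := by
    rw [← Real.rpow_mul hXnn, one_div_mul_cancel hp0.ne', Real.rpow_one]
  have hsum_eq : ∑ i, |∑ k, U i k * y k| ^ p = s ^ p * X := by
    rw [hX_def, Finset.mul_sum]
    refine Finset.sum_congr rfl fun i _ => ?_
    have hyk : ∑ k, U i k * y k = s * ∑ k, U i k * u k := by
      rw [Finset.mul_sum]
      refine Finset.sum_congr rfl fun k _ => ?_
      rw [hu_def]; field_simp
    rw [hyk, abs_mul, abs_of_pos hs, Real.mul_rpow hs.le (abs_nonneg _)]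
  constructor
  · have hX1 : c₁ ^ p ≤ X := by
      calc c₁ ^ p ≤ (X ^ (1 / p)) ^ p := Real.rpow_le_rpow hc₁.le h1 hp0.le
        _ = X := hpow
    rw [hsum_eq]
    calc c₁ ^ p * s ^ p ≤ X * s ^ p :=
          mul_le_mul_of_nonneg_right hX1 (Real.rpow_nonneg hs.le _)
      _ = s ^ p * X := mul_comm _ _
  · have hX2 : X ≤ c₂ ^ p := by
      calc X = (X ^ (1 / p)) ^ p := hpow.symm
        _ ≤ c₂ ^ p := Real.rpow_le_rpow (Real.rpow_nonneg hXnn _) h2 hp0.le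
    rw [hsum_eq]
    calc s ^ p * X ≤ s ^ p * c₂ ^ p :=
          mul_le_mul_of_nonneg_left hX2 (Real.rpow_nonneg hs.le _)
      _ = c₂ ^ p * s ^ p := mul_comm _ _

private lemma aux_span' (n m d : ℕ) (A : Fin n → Fin d → ℝ) (U : Fin n → Fin m → ℝ)
    (T : Fin m → Fin d → ℝ)
    (hA : ∀ i j, A i j = ∑ k, U i k * T k j)
    (hUinj : ∀ y : Fin m → ℝ, (∀ i, ∑ k, U i k * y k = 0) → y = 0) :
    Submodule.span ℝ (Set.range T) ≤ Submodule.span ℝ (Set.range A) := by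
  set MU : Matrix (Fin n) (Fin m) ℝ := Matrix.of U with hMU
  set MT : Matrix (Fin m) (Fin d) ℝ := Matrix.of T with hMT
  set MA : Matrix (Fin n) (Fin d) ℝ := Matrix.of A with hMA
  have hMAeq : MA = MU * MT := by
    ext i j; simp [hMA, hMU, hMT, Matrix.mul_apply, hA]
  have hker : LinearMap.ker MU.mulVecLin = ⊥ := by
    rw [Matrix.ker_mulVecLin_eq_bot_iff]
    intro v hv
    exact hUinj v (fun i => congrFun hv i)
  have hinj : Function.Injective MU.mulVecLin := LinearMap.ker_eq_bot.mp hker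
  have hrankU : MU.rank = m := by
    rw [Matrix.rank]
    rw [LinearMap.finrank_range_of_inj hinj]
    exact Module.finrank_fin_fun ℝ
  have hrankUT : (MUᵀ).rank = m := by rw [Matrix.rank_transpose]; exact hrankU
  have hrangeT : LinearMap.range (MUᵀ).mulVecLin = ⊤ := by
    apply Submodule.eq_top_of_finrank_eq
    rw [← Matrix.rank, hrankUT, Module.finrank_fin_fun]
  have hsurj : ∀ z : Fin m → ℝ, ∃ w : Fin n → ℝ, w ᵥ* MU = z := by
    intro z
    obtain ⟨w, hw⟩ := LinearMap.range_eq_top.mp hrangeT z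
    exact ⟨w, by rw [← Matrix.mulVec_transpose]; exact hw⟩
  intro x hx
  have hx' : x ∈ LinearMap.range MT.vecMulLinear := by
    rw [range_vecMulLinear]; exact hx
  obtain ⟨z, hz⟩ := hx'
  obtain ⟨w, hw⟩ := hsurj z
  have hxw : x = w ᵥ* MA := by
    rw [hMAeq, ← Matrix.vecMul_vecMul, hw]
    exact hz.symm ▸ rfl
  have hxA : x ∈ LinearMap.range MA.vecMulLinear := ⟨w, hxw.symm⟩
  rw [range_vecMulLinear] at hxA
  exact hxA

end helpers


/-- approximating the ℓ_p sensitivity via a well-conditioned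
basis: ‖b‖₂^p/c₂^p ≤ sup_{x ∈ rowspace(A), x≠0} |⟨a,x⟩|^p/‖Ax‖_p^p ≤ ‖b‖₂^p/c₁^p. -/
theorem stmt_17 (n m d : ℕ) (p c₁ c₂ : ℝ) (hp : 1 ≤ p) (hc₁ : 0 < c₁) (hc₂ : 0 < c₂)
    (A : Fin n → Fin d → ℝ) (U : Fin n → Fin m → ℝ) (T : Fin m → Fin d → ℝ)
    (Td : Fin d → Fin m → ℝ)
    -- A = U T
    (hA : ∀ i j, A i j = ∑ k, U i k * T k j)
    -- c₁ ≤ ‖Ux‖_p ≤ c₂ for all unit vectors x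
    (hU : ∀ x : Fin m → ℝ, Real.sqrt (∑ k, x k ^ 2) = 1 →
      c₁ ≤ (∑ i, |∑ k, U i k * x k| ^ p) ^ (1 / p) ∧
      (∑ i, |∑ k, U i k * x k| ^ p) ^ (1 / p) ≤ c₂)
    -- T T† = I
    (hTTd : ∀ k k', (∑ j, T k j * Td j k') = if k = k' then 1 else 0)
    -- colspace(T†) = rowspace(T)
    (hcol : Set.range (fun y : Fin m → ℝ => fun j => ∑ k, Td j k * y k)
      = (Submodule.span ℝ (Set.range T) : Set (Fin d → ℝ)))
    (a : Fin d → ℝ) (ha : a ∈ Submodule.span ℝ (Set.range A))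
    (b : Fin m → ℝ) (hb : ∀ k, b k = ∑ j, Td j k * a j) :
    Real.sqrt (∑ k, b k ^ 2) ^ p / c₂ ^ p
      ≤ sSup {ρ : ℝ | ∃ x : Fin d → ℝ,
          x ∈ Submodule.span ℝ (Set.range A) ∧ x ≠ 0 ∧
          ρ = |∑ j, a j * x j| ^ p / ∑ i, |∑ j, A i j * x j| ^ p} ∧
    sSup {ρ : ℝ | ∃ x : Fin d → ℝ,
          x ∈ Submodule.span ℝ (Set.range A) ∧ x ≠ 0 ∧
          ρ = |∑ j, a j * x j| ^ p / ∑ i, |∑ j, A i j * x j| ^ p}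
      ≤ Real.sqrt (∑ k, b k ^ 2) ^ p / c₁ ^ p := by
  have hp0 : (0:ℝ) < p := lt_of_lt_of_le one_pos hp
  set S := {ρ : ℝ | ∃ x : Fin d → ℝ,
      x ∈ Submodule.span ℝ (Set.range A) ∧ x ≠ 0 ∧
      ρ = |∑ j, a j * x j| ^ p / ∑ i, |∑ j, A i j * x j| ^ p} with hS
  set sb := Real.sqrt (∑ k, b k ^ 2) with hsb
  have hsbnn : 0 ≤ sb := Real.sqrt_nonneg _
  -- injectivity of U
  have hUinj : ∀ y : Fin m → ℝ, (∀ i, ∑ k, U i k * y k = 0) → y = 0 := by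
    intro y hy0
    by_contra hy
    have h := (aux_bounds' n m p c₁ c₂ hp hc₁ U hU y hy).1
    have hsum0 : ∑ i, |∑ k, U i k * y k| ^ p = 0 := by
      refine Finset.sum_eq_zero fun i _ => ?_
      rw [hy0 i, abs_zero, Real.zero_rpow hp0.ne']
    obtain ⟨k₀, hk₀⟩ := Function.ne_iff.mp hy
    have hspos : 0 < Real.sqrt (∑ k, y k ^ 2) :=
      Real.sqrt_pos.mpr
        (Finset.sum_pos' (fun k _ => sq_nonneg _) ⟨k₀, Finset.mem_univ _, sq_pos_of_ne_zero hk₀⟩)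
    have hpos : (0:ℝ) < c₁ ^ p * Real.sqrt (∑ k, y k ^ 2) ^ p :=
      mul_pos (Real.rpow_pos_of_pos hc₁ _) (Real.rpow_pos_of_pos hspos _)
    rw [hsum0] at h
    linarith
  have hspanTA := aux_span' n m d A U T hA hUinj
  have hspanAT : Submodule.span ℝ (Set.range A) ≤ Submodule.span ℝ (Set.range T) := by
    rw [Submodule.span_le]
    rintro _ ⟨i, rfl⟩
    have hAi : A i = ∑ k, U i k • T k := by
      ext j; simp [hA, Finset.sum_apply, smul_eq_mul]
    rw [hAi]
    exact Submodule.sum_mem _ fun k _ =>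
      Submodule.smul_mem _ _ (Submodule.subset_span ⟨k, rfl⟩)
  -- T recovers the coordinates
  have hψφ : ∀ (y : Fin m → ℝ) (k), (∑ j, T k j * (∑ k', Td j k' * y k')) = y k := by
    intro y k
    calc ∑ j, T k j * ∑ k', Td j k' * y k'
        = ∑ k', (∑ j, T k j * Td j k') * y k' := by
          simp_rw [Finset.mul_sum, Finset.sum_mul]
          rw [Finset.sum_comm]
          exact Finset.sum_congr rfl fun k' _ => Finset.sum_congr rfl fun j _ => by ring
      _ = y k := by simp [hTTd, ite_mul]
  -- decomposition of elements of rowspace(A)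
  have hdecomp : ∀ x : Fin d → ℝ, x ∈ Submodule.span ℝ (Set.range A) → x ≠ 0 →
      ∃ y : Fin m → ℝ, y ≠ 0 ∧ (∑ j, a j * x j = ∑ k, b k * y k) ∧
        (∀ i, ∑ j, A i j * x j = ∑ k, U i k * y k) := by
    intro x hxA hx0
    have hxT : x ∈ (Submodule.span ℝ (Set.range T) : Set (Fin d → ℝ)) := hspanAT hxA
    rw [← hcol] at hxT
    obtain ⟨y, hy⟩ := hxT
    have hxy : ∀ j, x j = ∑ k, Td j k * y k := fun j => (congrFun hy j).symm
    refine ⟨y, ?_, ?_, ?_⟩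
    · intro h0
      apply hx0
      ext j
      rw [hxy j, h0]
      simp
    · calc ∑ j, a j * x j = ∑ j, ∑ k, a j * (Td j k * y k) := by
            refine Finset.sum_congr rfl fun j _ => ?_
            rw [hxy j, Finset.mul_sum]
        _ = ∑ k, ∑ j, a j * (Td j k * y k) := Finset.sum_comm
        _ = ∑ k, b k * y k := by
            refine Finset.sum_congr rfl fun k _ => ?_
            rw [hb k, Finset.sum_mul]
            exact Finset.sum_congr rfl fun j _ => by ring
    · intro i
      calc ∑ j, A i j * x j = ∑ j, ∑ k, U i k * T k j * x j := by
            refine Finset.sum_congr rfl fun j _ => ?_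
            rw [hA i j, Finset.sum_mul]
        _ = ∑ k, ∑ j, U i k * T k j * x j := Finset.sum_comm
        _ = ∑ k, U i k * y k := by
            refine Finset.sum_congr rfl fun k _ => ?_
            have : ∑ j, T k j * x j = y k := by
              rw [← hψφ y k]
              exact Finset.sum_congr rfl fun j _ => by rw [hxy j]
            rw [← this, Finset.mul_sum]
            exact Finset.sum_congr rfl fun j _ => by ring
  -- upper bound for every element of S
  have hupper : ∀ ρ ∈ S, ρ ≤ sb ^ p / c₁ ^ p := by
    rintro ρ ⟨x, hxA, hx0, rfl⟩
    obtain ⟨y, hy0, hinner, hAx⟩ := hdecomp x hxA hx0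
    set sy := Real.sqrt (∑ k, y k ^ 2) with hsy
    have hsypos : 0 < sy := by
      obtain ⟨k₀, hk₀⟩ := Function.ne_iff.mp hy0
      exact Real.sqrt_pos.mpr
        (Finset.sum_pos' (fun k _ => sq_nonneg _) ⟨k₀, Finset.mem_univ _, sq_pos_of_ne_zero hk₀⟩)
    have hCS : |∑ k, b k * y k| ≤ sb * sy := by
      have h2 := Finset.sum_mul_sq_le_sq_mul_sq Finset.univ b y
      have h3 := Real.sqrt_le_sqrt h2
      rwa [Real.sqrt_sq_eq_abs,
        Real.sqrt_mul (Finset.sum_nonneg fun k _ => sq_nonneg _)] at h3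
    have hnum : |∑ j, a j * x j| ^ p ≤ sb ^ p * sy ^ p := by
      rw [hinner, ← Real.mul_rpow hsbnn hsypos.le]
      exact Real.rpow_le_rpow (abs_nonneg _) hCS hp0.le
    have hden : c₁ ^ p * sy ^ p ≤ ∑ i, |∑ j, A i j * x j| ^ p := by
      have := (aux_bounds' n m p c₁ c₂ hp hc₁ U hU y hy0).1
      calc c₁ ^ p * sy ^ p ≤ ∑ i, |∑ k, U i k * y k| ^ p := this
        _ = ∑ i, |∑ j, A i j * x j| ^ p :=
            Finset.sum_congr rfl fun i _ => by rw [hAx i]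
    have hdpos : 0 < c₁ ^ p * sy ^ p :=
      mul_pos (Real.rpow_pos_of_pos hc₁ _) (Real.rpow_pos_of_pos hsypos _)
    calc |∑ j, a j * x j| ^ p / ∑ i, |∑ j, A i j * x j| ^ p
        ≤ (sb ^ p * sy ^ p) / (c₁ ^ p * sy ^ p) :=
          div_le_div₀ (by positivity) hnum hdpos hden
      _ = sb ^ p / c₁ ^ p :=
          mul_div_mul_right _ _ (ne_of_gt (Real.rpow_pos_of_pos hsypos _))
  have hBnn : 0 ≤ sb ^ p / c₁ ^ p := by positivity
  have hbdd : BddAbove S := ⟨sb ^ p / c₁ ^ p, fun ρ hρ => hupper ρ hρ⟩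
  constructor
  · -- lower bound
    by_cases hb0 : b = 0
    · have : sb = 0 := by rw [hsb, hb0]; simp
      rw [this, Real.zero_rpow hp0.ne', zero_div]
      exact Real.sSup_nonneg fun ρ hρ => by
        obtain ⟨x, hxA, hx0, rfl⟩ := hρ
        positivity
    · set x₀ : Fin d → ℝ := fun j => ∑ k, Td j k * b k with hx₀def
      have hx₀T : x₀ ∈ (Submodule.span ℝ (Set.range T) : Set (Fin d → ℝ)) := by
        rw [← hcol]; exact ⟨b, rfl⟩
      have hx₀A : x₀ ∈ Submodule.span ℝ (Set.range A) := hspanTA hx₀T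
      have hsbpos : 0 < sb := by
        obtain ⟨k₀, hk₀⟩ := Function.ne_iff.mp hb0
        exact Real.sqrt_pos.mpr
          (Finset.sum_pos' (fun k _ => sq_nonneg _) ⟨k₀, Finset.mem_univ _, sq_pos_of_ne_zero hk₀⟩)
      have hx₀0 : x₀ ≠ 0 := by
        intro h0
        apply hb0
        ext k
        have := hψφ b k
        rw [show (∑ j, T k j * ∑ k', Td j k' * b k') = ∑ j, T k j * x₀ j from rfl] at this
        rw [h0] at this
        simpa using this.symm
      obtain ⟨y, hy0, hinner, hAx⟩ := hdecomp x₀ hx₀A hx₀0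
      -- here in fact y = b is not needed; compute directly instead
      have hinner0 : ∑ j, a j * x₀ j = ∑ k, b k ^ 2 := by
        calc ∑ j, a j * x₀ j = ∑ j, ∑ k, a j * (Td j k * b k) := by
              refine Finset.sum_congr rfl fun j _ => ?_
              rw [hx₀def, Finset.mul_sum]
          _ = ∑ k, ∑ j, a j * (Td j k * b k) := Finset.sum_comm
          _ = ∑ k, b k ^ 2 := by
              refine Finset.sum_congr rfl fun k _ => ?_
              have h4 : ∑ j, a j * (Td j k * b k) = (∑ j, Td j k * a j) * b k := by
                rw [Finset.sum_mul]
                exact Finset.sum_congr rfl fun j _ => by ring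
              rw [h4, ← hb k, sq]
      have hAx0 : ∀ i, ∑ j, A i j * x₀ j = ∑ k, U i k * b k := by
        intro i
        calc ∑ j, A i j * x₀ j = ∑ j, ∑ k, U i k * T k j * x₀ j := by
              refine Finset.sum_congr rfl fun j _ => ?_
              rw [hA i j, Finset.sum_mul]
          _ = ∑ k, ∑ j, U i k * T k j * x₀ j := Finset.sum_comm
          _ = ∑ k, U i k * b k := by
              refine Finset.sum_congr rfl fun k _ => ?_
              have : ∑ j, T k j * x₀ j = b k := hψφ b k
              rw [← this, Finset.mul_sum]
              exact Finset.sum_congr rfl fun j _ => by ring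
      have hmem : |∑ j, a j * x₀ j| ^ p / ∑ i, |∑ j, A i j * x₀ j| ^ p ∈ S :=
        ⟨x₀, hx₀A, hx₀0, rfl⟩
      have hnum0 : |∑ j, a j * x₀ j| ^ p = sb ^ p * sb ^ p := by
        rw [hinner0, abs_of_nonneg (Finset.sum_nonneg fun k _ => sq_nonneg _)]
        have : (∑ k, b k ^ 2) = sb * sb := (Real.mul_self_sqrt
          (Finset.sum_nonneg fun k _ => sq_nonneg _)).symm
        rw [this, Real.mul_rpow hsbnn hsbnn]
      have hden0u : ∑ i, |∑ j, A i j * x₀ j| ^ p ≤ c₂ ^ p * sb ^ p := by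
        have := (aux_bounds' n m p c₁ c₂ hp hc₁ U hU b hb0).2
        calc ∑ i, |∑ j, A i j * x₀ j| ^ p = ∑ i, |∑ k, U i k * b k| ^ p :=
              Finset.sum_congr rfl fun i _ => by rw [hAx0 i]
          _ ≤ c₂ ^ p * sb ^ p := this
      have hden0l : 0 < ∑ i, |∑ j, A i j * x₀ j| ^ p := by
        have := (aux_bounds' n m p c₁ c₂ hp hc₁ U hU b hb0).1
        have hpos : 0 < c₁ ^ p * sb ^ p :=
          mul_pos (Real.rpow_pos_of_pos hc₁ _) (Real.rpow_pos_of_pos hsbpos _)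
        calc (0:ℝ) < c₁ ^ p * sb ^ p := hpos
          _ ≤ ∑ i, |∑ k, U i k * b k| ^ p := this
          _ = ∑ i, |∑ j, A i j * x₀ j| ^ p :=
              Finset.sum_congr rfl fun i _ => by rw [hAx0 i]
      have hlow : sb ^ p / c₂ ^ p ≤
          |∑ j, a j * x₀ j| ^ p / ∑ i, |∑ j, A i j * x₀ j| ^ p := by
        have h1 : sb ^ p / c₂ ^ p = (sb ^ p * sb ^ p) / (c₂ ^ p * sb ^ p) :=
          (mul_div_mul_right _ _ (ne_of_gt (Real.rpow_pos_of_pos hsbpos _))).symm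
        rw [h1, hnum0]
        exact div_le_div₀ (by positivity) le_rfl hden0l hden0u
      exact le_trans hlow (le_csSup hbdd hmem)
  · exact Real.sSup_le hupper hBnn
end
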